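/- arXiv:2511.03368 — 5 statements merged into one kernel-verified Lean document; each statement's English description precedes it below -/
import Mathlib

section
/- A standard interference function has at most one fixed point: if T : ℝ_+^d → ℝ_+^d is positive, monotone, and scalable, and T(x) = x and T(y) = y with x, y ≥ 0, then x = y. -/
lemma sif_le {d : ℕ} (T : (Fin d → ℝ) → (Fin d → ℝ))
    (hpos : ∀ x : Fin d → ℝ, (∀ m, 0 ≤ x m) → ∀ m, 0 < T x m)
    (hmono : ∀ x y : Fin d → ℝ, (∀ m, 0 ≤ y m) → (∀ m, y m ≤ x m) →
      ∀ m, T y m ≤ T x m)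
    (hscal : ∀ (α : ℝ), 1 < α → ∀ x : Fin d → ℝ, (∀ m, 0 ≤ x m) →
      ∀ m, T (fun n => α * x n) m < α * T x m)
    (x y : Fin d → ℝ) (hx : ∀ m, 0 ≤ x m) (hy : ∀ m, 0 ≤ y m)
    (hfx : T x = x) (hfy : T y = y) : ∀ m, y m ≤ x m := by
  intro m
  have hxpos : ∀ m, 0 < x m := by
    intro m; rw [← hfx]; exact hpos x hx m
  -- find coordinate maximizing y m / x m
  rcases Finset.exists_max_image Finset.univ (fun m => y m / x m) ⟨m, Finset.mem_univ m⟩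
    with ⟨m0, _, hm0⟩
  set β := y m0 / x m0 with hβ
  have hle : ∀ n, y n ≤ β * x n := by
    intro n
    have := hm0 n (Finset.mem_univ n)
    calc y n = (y n / x n) * x n := (div_mul_cancel₀ _ (ne_of_gt (hxpos n))).symm
    _ ≤ β * x n := by
        exact mul_le_mul_of_nonneg_right this (le_of_lt (hxpos n))
  by_cases hβ1 : β ≤ 1
  · calc y m ≤ β * x m := hle m
    _ ≤ 1 * x m := mul_le_mul_of_nonneg_right hβ1 (le_of_lt (hxpos m))
    _ = x m := one_mul _
  · push_neg at hβ1
    exfalso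
    have h1 : y m0 ≤ T (fun n => β * x n) m0 := by
      rw [← hfy]
      exact hmono _ y hy hle m0
    have h2 : T (fun n => β * x n) m0 < β * T x m0 := hscal β hβ1 x hx m0
    have h3 : β * x m0 = y m0 := by
      rw [hβ, div_mul_eq_mul_div, mul_div_assoc, div_self (ne_of_gt (hxpos m0)), mul_one]
    rw [hfx, h3] at h2
    exact absurd (lt_of_le_of_lt h1 h2) (lt_irrefl _)

/-- A standard interference function has at most one fixed point. -/
theorem stmt_3 {d : ℕ} (T : (Fin d → ℝ) → (Fin d → ℝ))
    (hpos : ∀ x : Fin d → ℝ, (∀ m, 0 ≤ x m) → ∀ m, 0 < T x m)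
    (hmono : ∀ x y : Fin d → ℝ, (∀ m, 0 ≤ y m) → (∀ m, y m ≤ x m) →
      ∀ m, T y m ≤ T x m)
    (hscal : ∀ (α : ℝ), 1 < α → ∀ x : Fin d → ℝ, (∀ m, 0 ≤ x m) →
      ∀ m, T (fun n => α * x n) m < α * T x m)
    (x y : Fin d → ℝ) (hx : ∀ m, 0 ≤ x m) (hy : ∀ m, 0 ≤ y m)
    (hfx : T x = x) (hfy : T y = y) : x = y := by
  funext m
  exact le_antisymm
    (sif_le T hpos hmono hscal y x hy hx hfy hfx m)
    (sif_le T hpos hmono hscal x y hx hy hfx hfy m)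
end

section
/- If T is a standard interference function and there exists a vector z ≥ 0 with T(z) ≤ z componentwise, then the iteration x^{(0)} = z, x^{(t+1)} = T(x^{(t)}) produces a componentwise monotone nonincreasing sequence that is bounded below by 0, and hence converges; its limit is a fixed point of T when T is continuous. -/
/-- If `T` is a continuous standard interference function and `T z ≤ z` for
some `z ≥ 0`, then the iteration started at `z` is componentwise
nonincreasing, bounded below by `0`, converges, and its limit is a fixed
point of `T`. -/
theorem stmt_4 {d : ℕ} (T : (Fin d → ℝ) → (Fin d → ℝ))
    (hpos : ∀ x : Fin d → ℝ, (∀ m, 0 ≤ x m) → ∀ m, 0 < T x m)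
    (hmono : ∀ x y : Fin d → ℝ, (∀ m, 0 ≤ y m) → (∀ m, y m ≤ x m) →
      ∀ m, T y m ≤ T x m)
    (hscal : ∀ (α : ℝ), 1 < α → ∀ x : Fin d → ℝ, (∀ m, 0 ≤ x m) →
      ∀ m, T (fun n => α * x n) m < α * T x m)
    (hcont : Continuous T)
    (z : Fin d → ℝ) (hz : ∀ m, 0 ≤ z m) (hfeas : ∀ m, T z m ≤ z m)
    (x : ℕ → Fin d → ℝ) (hx0 : x 0 = z) (hxs : ∀ t, x (t + 1) = T (x t)) :
    (∀ t m, x (t + 1) m ≤ x t m) ∧ (∀ t m, 0 ≤ x t m) ∧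
    ∃ L : Fin d → ℝ, Filter.Tendsto x Filter.atTop (nhds L) ∧ T L = L := by

  have hnn : ∀ t m, 0 ≤ x t m := by
    intro t
    induction t with
    | zero => rw [hx0]; exact hz
    | succ n ih =>
      intro m
      rw [hxs]
      exact (hpos (x n) ih m).le
  have hdec : ∀ t m, x (t + 1) m ≤ x t m := by
    intro t
    induction t with
    | zero => rw [hxs, hx0]; exact hfeas
    | succ n ih =>
      intro m
      rw [hxs (n+1)]
      calc T (x (n+1)) m ≤ T (x n) m := hmono (x n) (x (n+1)) (hnn (n+1)) ih m
        _ = x (n+1) m := (hxs n).symm ▸ rfl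
  refine ⟨hdec, hnn, ?_⟩
  set L : Fin d → ℝ := fun m => ⨅ t, x t m with hL
  have hanti : ∀ m, Antitone (fun t => x t m) := by
    intro m
    exact antitone_nat_of_succ_le (fun n => hdec n m)
  have hbdd : ∀ m, BddBelow (Set.range (fun t => x t m)) := by
    intro m
    exact ⟨0, by rintro _ ⟨t, rfl⟩; exact hnn t m⟩
  have htend : Filter.Tendsto x Filter.atTop (nhds L) := by
    rw [tendsto_pi_nhds]
    intro m
    exact tendsto_atTop_ciInf (hanti m) (hbdd m)
  refine ⟨L, htend, ?_⟩
  have h1 : Filter.Tendsto (fun t => x (t + 1)) Filter.atTop (nhds L) :=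
    htend.comp (Filter.tendsto_add_atTop_nat 1)
  have h2 : Filter.Tendsto (fun t => T (x t)) Filter.atTop (nhds (T L)) :=
    (hcont.tendsto L).comp htend
  have h3 : (fun t => x (t + 1)) = fun t => T (x t) := funext hxs
  rw [h3] at h1
  exact tendsto_nhds_unique h2 h1
end

section
/- Feasibility of the TripleWin operator: under the standing conditions there exists a nonnegative vector p̄ with Q(p̄) ≤ p̄ componentwise. Concretely, for each model j set L_j = (κ_{M_j}^max + (1+δ_{M_j})·S_j)/(1−ρ_j) where S_j = Σ_{i∈D_{M_j}} κ_{D_i} and κ_{M_j}^max is the maximal model-side offset over buyers of j; then p̄_{B_k→M_j} = L_j and p̄_{D_i→M_j} = κ_{D_i} + (SV_{i|j}/(1+δ_{M_j}))·ρ_j·L_j satisfy Q(p̄) ≤ p̄. -/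
/-- Feasibility of the TripleWin operator: the explicit vector `p̄` built from
`L_j = (κ_{M_j}^max + (1+δ_j)·S_j)/(1−ρ_j)` satisfies `Q(p̄) ≤ p̄`. -/
theorem stmt_5 {J I K : Type*} [Fintype I] [Fintype K]
    (D : J → Finset I) (B : J → Finset K)
    (κM : J → K → ℝ) (κD : I → ℝ) (δ : J → ℝ)
    (SV : J → I → ℝ) (ω : J → K → ℝ)
    (hB : ∀ j, (B j).Nonempty)
    (hκM : ∀ j k, 0 < κM j k) (hκD : ∀ i, 0 < κD i) (hδ : ∀ j, 0 ≤ δ j)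
    (hSV : ∀ j i, 0 ≤ SV j i) (hSVsum : ∀ j, ∑ i ∈ D j, SV j i = 1)
    (hω : ∀ j k, 0 ≤ ω j k) (hρ : ∀ j, ∑ k ∈ B j, ω j k < 1)
    (S : J → ℝ) (hS : ∀ j, S j = ∑ i ∈ D j, κD i)
    (L : J → ℝ)
    (hL : ∀ j, L j = ((B j).sup' (hB j) (κM j) + (1 + δ j) * S j) /
        (1 - ∑ k ∈ B j, ω j k))
    (pB : J → K → ℝ) (pD : J → I → ℝ)
    (hpB : ∀ j k, pB j k = L j)
    (hpD : ∀ j i, pD j i =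
      κD i + (SV j i / (1 + δ j)) * ((∑ k ∈ B j, ω j k) * L j)) :
    (∀ j, ∀ k ∈ B j,
      κM j k + (1 + δ j) * ∑ i ∈ D j, pD j i ≤ pB j k) ∧
    (∀ j, ∀ i ∈ D j,
      κD i + (SV j i / (1 + δ j)) * ∑ k ∈ B j, ω j k * pB j k ≤ pD j i) := by
  have hδpos : ∀ j, (0:ℝ) < 1 + δ j := fun j => by linarith [hδ j]
  have hρpos : ∀ j, (0:ℝ) < 1 - ∑ k ∈ B j, ω j k := fun j => by linarith [hρ j]
  have hsum : ∀ j, ∑ i ∈ D j, pD j i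
      = S j + ((∑ k ∈ B j, ω j k) * L j) / (1 + δ j) := by
    intro j
    simp only [hpD, Finset.sum_add_distrib, ← hS j, div_mul_eq_mul_div,
      ← Finset.sum_div, ← Finset.sum_mul, hSVsum j, one_mul]
  have key : ∀ j, (B j).sup' (hB j) (κM j) + (1 + δ j) * S j
      + (∑ k ∈ B j, ω j k) * L j = L j := by
    intro j
    have h := hL j
    rw [eq_div_iff (hρpos j).ne'] at h
    linear_combination -h
  constructor
  · intro j k hk
    rw [hpB, hsum]
    have hk' : κM j k ≤ (B j).sup' (hB j) (κM j) := Finset.le_sup' _ hk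
    have h1 : (1 + δ j) * (S j + ((∑ k ∈ B j, ω j k) * L j) / (1 + δ j))
        = (1 + δ j) * S j + (∑ k ∈ B j, ω j k) * L j := by
      rw [mul_add, mul_div_assoc', mul_div_cancel_left₀ _ (hδpos j).ne']
    rw [h1]
    linarith [key j]
  · intro j i _
    rw [hpD]
    have : ∑ k ∈ B j, ω j k * pB j k = (∑ k ∈ B j, ω j k) * L j := by
      simp only [hpB, ← Finset.sum_mul]
    rw [this]
end

section
/- Closed-form uniform buyer price under a platform fee: at a TripleWin fixed point under uniform ad-valorem fee τ ∈ [0,1) with grossing factor α = 1/(1−τ), all buyers of model j face the same price p_{M_j} = α·(κ_{M_j} + (1+δ_{M_j})·S_j)/(1−ρ_j), where S_j = Σ_{i∈D_{M_j}} κ_{D_i}. -/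
/-- Closed-form uniform buyer price under a uniform ad-valorem platform fee
with grossing factor `α`: all buyers of model `j` face the price
`α·(κ_{M_j} + (1+δ_j)·S_j)/(1−ρ_j)`. -/
theorem stmt_11 {I K : Type*} [Fintype I] [Fintype K]
    (Dj : Finset I) (Bj : Finset K)
    (κM : ℝ) (κD : I → ℝ) (δ : ℝ) (SV : I → ℝ) (ω : K → ℝ)
    (τ α : ℝ) (hτ0 : 0 ≤ τ) (hτ1 : τ < 1) (hα : α = 1 / (1 - τ))
    (hκM : 0 < κM) (hκD : ∀ i, 0 < κD i) (hδ : 0 ≤ δ)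
    (hSV : ∀ i, 0 ≤ SV i) (hSVsum : ∑ i ∈ Dj, SV i = 1)
    (hω : ∀ k, 0 ≤ ω k) (ρ : ℝ) (hρ : ρ = ∑ k ∈ Bj, ω k)
    (hρ0 : 0 ≤ ρ) (hρ1 : ρ < 1)
    (pB : K → ℝ) (pD : I → ℝ) (W : ℝ)
    (hW : W = ∑ k ∈ Bj, ω k * pB k)
    (hfixB : ∀ k ∈ Bj, pB k = α * κM + (1 + δ) * ∑ i ∈ Dj, pD i)
    (hfixD : ∀ i ∈ Dj, pD i = α * κD i + (SV i / (1 + δ)) * W)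
    (S : ℝ) (hS : S = ∑ i ∈ Dj, κD i) :
    ∀ k ∈ Bj, pB k = α * (κM + (1 + δ) * S) / (1 - ρ) := by
  have hδ1 : (1 + δ) ≠ 0 := by linarith
  have hρne : (1 - ρ) ≠ 0 := by linarith
  obtain ⟨P, hP⟩ : ∃ P, P = α * κM + (1 + δ) * ∑ i ∈ Dj, pD i := ⟨_, rfl⟩
  have hfixB' : ∀ k ∈ Bj, pB k = P := fun k hk => (hfixB k hk).trans hP.symm
  have hWP : W = ρ * P := by
    rw [hW, hρ, Finset.sum_mul]
    exact Finset.sum_congr rfl fun k hk => by rw [hfixB' k hk]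
  have hsumD : ∑ i ∈ Dj, pD i = α * S + W / (1 + δ) := by
    calc ∑ i ∈ Dj, pD i = ∑ i ∈ Dj, (α * κD i + (SV i / (1 + δ)) * W) :=
          Finset.sum_congr rfl hfixD
      _ = α * S + W / (1 + δ) := by
          rw [Finset.sum_add_distrib, hS, ← Finset.mul_sum, ← Finset.sum_mul,
            ← Finset.sum_div, hSVsum]
          ring
  have hc : (1 + δ) * (ρ * P / (1 + δ)) = ρ * P := by field_simp
  have key : P = α * κM + (1 + δ) * α * S + ρ * P := by
    conv_lhs => rw [hP, hsumD, hWP]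
    rw [mul_add, hc]; ring
  have hPeq : P = α * (κM + (1 + δ) * S) / (1 - ρ) := by
    rw [eq_div_iff hρne]; linear_combination key
  intro k hk
  rw [hfixB' k hk, hPeq]
end

section
/- Strict monotonicity of the fixed point under strictly increased offsets: under the setup of operators Q and Q̃ differing only in offsets with κ̃ ≥ κ componentwise, if the operators satisfy Q̃(p) ≥ Q(p) for all p with strict inequality in at least one component for every p, and both fixed points p*, p̃* exist as limits of monotone iterations from a common feasible upper bound, then p̃* ≥ p* and p̃* is strictly greater than p* in every component whose offset was strictly increased. -/
/-- Strict monotonicity of the fixed point under strictly increased offsets: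
`p̃* ≥ p*` componentwise, and strictly greater in every component whose
offset was strictly increased. -/
theorem stmt_19 {J I K : Type*} [Fintype I] [Fintype K]
    (D : J → Finset I) (B : J → Finset K)
    (κM κM' : J → ℝ) (κD κD' : I → ℝ) (δ : J → ℝ)
    (SV : J → I → ℝ) (ω : J → K → ℝ)
    (hκM : ∀ j, 0 < κM j) (hκD : ∀ i, 0 < κD i) (hδ : ∀ j, 0 ≤ δ j)
    (hSV : ∀ j i, 0 ≤ SV j i) (hω : ∀ j k, 0 ≤ ω j k)
    (hκMle : ∀ j, κM j ≤ κM' j) (hκDle : ∀ i, κD i ≤ κD' i)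
    (Q Q' : ((J → K → ℝ) × (J → I → ℝ)) → ((J → K → ℝ) × (J → I → ℝ)))
    (hQ : ∀ p, Q p =
      (fun j _k => κM j + (1 + δ j) * ∑ i ∈ D j, p.2 j i,
       fun j i => κD i + (SV j i / (1 + δ j)) * ∑ k ∈ B j, ω j k * p.1 j k))
    (hQ' : ∀ p, Q' p =
      (fun j _k => κM' j + (1 + δ j) * ∑ i ∈ D j, p.2 j i,
       fun j i => κD' i + (SV j i / (1 + δ j)) * ∑ k ∈ B j, ω j k * p.1 j k))
    (hdom : ∀ p, (∀ j k, (Q p).1 j k ≤ (Q' p).1 j k) ∧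
                 (∀ j i, (Q p).2 j i ≤ (Q' p).2 j i))
    (hstrict : ∀ p, (∃ j k, (Q p).1 j k < (Q' p).1 j k) ∨
                    (∃ j i, (Q p).2 j i < (Q' p).2 j i))
    (pbar : (J → K → ℝ) × (J → I → ℝ))
    (hfeas : ∀ j k, (Q pbar).1 j k ≤ pbar.1 j k)
    (hfeas2 : ∀ j i, (Q pbar).2 j i ≤ pbar.2 j i)
    (hfeas' : ∀ j k, (Q' pbar).1 j k ≤ pbar.1 j k)
    (hfeas2' : ∀ j i, (Q' pbar).2 j i ≤ pbar.2 j i)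
    (x x' : ℕ → (J → K → ℝ) × (J → I → ℝ))
    (hx0 : x 0 = pbar) (hxs : ∀ t, x (t + 1) = Q (x t))
    (hx0' : x' 0 = pbar) (hxs' : ∀ t, x' (t + 1) = Q' (x' t))
    (pstar pstar' : (J → K → ℝ) × (J → I → ℝ))
    (hlim : Filter.Tendsto x Filter.atTop (nhds pstar))
    (hlim' : Filter.Tendsto x' Filter.atTop (nhds pstar'))
    (hfixQ : Q pstar = pstar) (hfixQ' : Q' pstar' = pstar') :
    (∀ j k, pstar.1 j k ≤ pstar'.1 j k) ∧
    (∀ j i, pstar.2 j i ≤ pstar'.2 j i) ∧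
    (∀ j k, κM j < κM' j → pstar.1 j k < pstar'.1 j k) ∧
    (∀ j i, κD i < κD' i → pstar.2 j i < pstar'.2 j i) := by
  have hδpos : ∀ j, (0:ℝ) < 1 + δ j := fun j => by linarith [hδ j]
  have hcoef : ∀ j i, (0:ℝ) ≤ SV j i / (1 + δ j) := fun j i =>
    div_nonneg (hSV j i) (le_of_lt (hδpos j))
  -- monotone domination along iterations
  have hmono : ∀ t, (∀ j k, (x t).1 j k ≤ (x' t).1 j k) ∧
      (∀ j i, (x t).2 j i ≤ (x' t).2 j i) := by
    intro t
    induction t with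
    | zero => rw [hx0, hx0']; exact ⟨fun _ _ => le_rfl, fun _ _ => le_rfl⟩
    | succ t ih =>
      rw [hxs, hxs', hQ, hQ']
      constructor
      · intro j k
        simp only
        refine add_le_add (hκMle j) (mul_le_mul_of_nonneg_left ?_ (le_of_lt (hδpos j)))
        exact Finset.sum_le_sum fun i _ => ih.2 j i
      · intro j i
        simp only
        refine add_le_add (hκDle i) (mul_le_mul_of_nonneg_left ?_ (hcoef j i))
        exact Finset.sum_le_sum fun k _ => mul_le_mul_of_nonneg_left (ih.1 j k) (hω j k)
  -- componentwise limits
  have hle1 : ∀ j k, pstar.1 j k ≤ pstar'.1 j k := by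
    intro j k
    have c : Continuous fun p : (J → K → ℝ) × (J → I → ℝ) => p.1 j k := by
      exact (continuous_apply k).comp ((continuous_apply j).comp continuous_fst)
    exact le_of_tendsto_of_tendsto' (c.continuousAt.tendsto.comp hlim)
      (c.continuousAt.tendsto.comp hlim') (fun t => (hmono t).1 j k)
  have hle2 : ∀ j i, pstar.2 j i ≤ pstar'.2 j i := by
    intro j i
    have c : Continuous fun p : (J → K → ℝ) × (J → I → ℝ) => p.2 j i := by
      exact (continuous_apply i).comp ((continuous_apply j).comp continuous_snd)
    exact le_of_tendsto_of_tendsto' (c.continuousAt.tendsto.comp hlim)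
      (c.continuousAt.tendsto.comp hlim') (fun t => (hmono t).2 j i)
  refine ⟨hle1, hle2, ?_, ?_⟩
  · intro j k hlt
    have e1 : pstar.1 j k = κM j + (1 + δ j) * ∑ i ∈ D j, pstar.2 j i := by
      conv_lhs => rw [← hfixQ]
      rw [hQ]
    have e2 : pstar'.1 j k = κM' j + (1 + δ j) * ∑ i ∈ D j, pstar'.2 j i := by
      conv_lhs => rw [← hfixQ']
      rw [hQ']
    rw [e1, e2]
    refine add_lt_add_of_lt_of_le hlt
      (mul_le_mul_of_nonneg_left ?_ (le_of_lt (hδpos j)))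
    exact Finset.sum_le_sum fun i _ => hle2 j i
  · intro j i hlt
    have e1 : pstar.2 j i = κD i + (SV j i / (1 + δ j)) * ∑ k ∈ B j, ω j k * pstar.1 j k := by
      conv_lhs => rw [← hfixQ]
      rw [hQ]
    have e2 : pstar'.2 j i = κD' i + (SV j i / (1 + δ j)) * ∑ k ∈ B j, ω j k * pstar'.1 j k := by
      conv_lhs => rw [← hfixQ']
      rw [hQ']
    rw [e1, e2]
    refine add_lt_add_of_lt_of_le hlt (mul_le_mul_of_nonneg_left ?_ (hcoef j i))
    exact Finset.sum_le_sum fun k _ => mul_le_mul_of_nonneg_left (hle1 j k) (hω j k)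
end
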